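/- In an infinitary pretopos C, the full subcategory of C/(X × X) spanned by equivalence relations on X is reflective: the inclusion functor has a left adjoint, sending A ∈ C/(X × X) to the image (monomorphic part of the effective-epi/mono factorization) of the map G_X(A) → X × X, where G_X(A) is the free internal 'zigzag' object ∐_{n≥0} (A ⊔ A^op)^{⊗_X n}. -/

import Mathlib

open CategoryTheory CategoryTheory.Limits

universe v u

variable {C : Type u} [Category.{v} C] [HasFiniteLimits C]

namespace RelTensor

variable (X : C)

/-- The source map of an object of `C/(X × X)`. -/
noncomputable abbrev src (A : Over (X ⨯ X)) : A.left ⟶ X := A.hom ≫ prod.fst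

/-- The target map of an object of `C/(X × X)`. -/
noncomputable abbrev tgt (A : Over (X ⨯ X)) : A.left ⟶ X := A.hom ≫ prod.snd

/-- The composition tensor product `A ⊗_X B = A ×_{d₁, X, d₀} B` on `C/(X × X)`. -/
noncomputable def tens (A B : Over (X ⨯ X)) : Over (X ⨯ X) :=
  Over.mk (prod.lift (pullback.fst (tgt X A) (src X B) ≫ src X A)
    (pullback.snd (tgt X A) (src X B) ≫ tgt X B))

/-- The unit for `⊗_X`: the diagonal `X ⟶ X × X`. -/
noncomputable def unitX : Over (X ⨯ X) := Over.mk (diag X)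

/-- The opposite relation, obtained by swapping the two structure maps. -/
noncomputable def opX : Over (X ⨯ X) ⥤ Over (X ⨯ X) :=
  Over.map (prod.braiding X X).hom

end RelTensor

variable (C)

/-- An equivalence groupoid in `C`: a pair of objects with a monomorphism
`X₁ ⟶ X₀ ⨯ X₀` which is an internal equivalence relation. -/
structure EqGpd where
  X₀ : C
  X₁ : C
  d₀ : X₁ ⟶ X₀
  d₁ : X₁ ⟶ X₀
  mono : Mono (prod.lift d₀ d₁)
  refl : ∀ (T : C) (x : T ⟶ X₀), ∃ h : T ⟶ X₁, h ≫ d₀ = x ∧ h ≫ d₁ = x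
  symm : ∀ (T : C) (x y : T ⟶ X₀), (∃ h : T ⟶ X₁, h ≫ d₀ = x ∧ h ≫ d₁ = y) →
    ∃ h : T ⟶ X₁, h ≫ d₀ = y ∧ h ≫ d₁ = x
  trans : ∀ (T : C) (x y z : T ⟶ X₀),
    (∃ h : T ⟶ X₁, h ≫ d₀ = x ∧ h ≫ d₁ = y) →
    (∃ h : T ⟶ X₁, h ≫ d₀ = y ∧ h ≫ d₁ = z) →
    ∃ h : T ⟶ X₁, h ≫ d₀ = x ∧ h ≫ d₁ = z

namespace EqGpd

variable {C}

/-- A morphism of equivalence groupoids. -/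
@[ext]
structure Hom (A B : EqGpd C) where
  f₀ : A.X₀ ⟶ B.X₀
  f₁ : A.X₁ ⟶ B.X₁
  w₀ : f₁ ≫ B.d₀ = A.d₀ ≫ f₀
  w₁ : f₁ ≫ B.d₁ = A.d₁ ≫ f₀

instance : Category (EqGpd C) where
  Hom A B := Hom A B
  id A := ⟨𝟙 _, 𝟙 _, by simp, by simp⟩
  comp {A B D} f g := ⟨f.f₀ ≫ g.f₀, f.f₁ ≫ g.f₁,
    by rw [Category.assoc, g.w₀, ← Category.assoc, f.w₀, Category.assoc],
    by rw [Category.assoc, g.w₁, ← Category.assoc, f.w₁, Category.assoc]⟩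
  id_comp f := by apply Hom.ext <;> simp
  comp_id f := by apply Hom.ext <;> simp
  assoc f g h := by apply Hom.ext <;> simp

@[simp] lemma comp_f₀ {A B D : EqGpd C} (f : A ⟶ B) (g : B ⟶ D) :
    (f ≫ g).f₀ = f.f₀ ≫ g.f₀ := rfl

@[simp] lemma comp_f₁ {A B D : EqGpd C} (f : A ⟶ B) (g : B ⟶ D) :
    (f ≫ g).f₁ = f.f₁ ≫ g.f₁ := rfl

@[simp] lemma id_f₀ (A : EqGpd C) : (𝟙 A : A ⟶ A).f₀ = 𝟙 A.X₀ := rfl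

@[simp] lemma id_f₁ (A : EqGpd C) : (𝟙 A : A ⟶ A).f₁ = 𝟙 A.X₁ := rfl

/-- The homotopy relation on morphisms of equivalence groupoids. -/
def htpy : HomRel (EqGpd C) := fun {A B} f g =>
  ∃ h : A.X₀ ⟶ B.X₁, h ≫ B.d₀ = f.f₀ ∧ h ≫ B.d₁ = g.f₀

/-- The embedding of `C` into equivalence groupoids via diagonals. -/
def disc : C ⥤ EqGpd C where
  obj X :=
    { X₀ := X
      X₁ := X
      d₀ := 𝟙 X
      d₁ := 𝟙 X
      mono := ⟨fun {Z} g h w => by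
        have := congrArg (fun t => t ≫ (prod.fst : X ⨯ X ⟶ X)) w
        simp only [Category.assoc, prod.lift_fst, Category.comp_id] at this
        exact this⟩
      refl := fun T x => ⟨x, by simp, by simp⟩
      symm := fun T x y ⟨h, h0, h1⟩ => ⟨h, by simpa using h1, by simpa using h0⟩
      trans := fun T x y z ⟨h, h0, h1⟩ ⟨k, k0, k1⟩ =>
        ⟨h, h0, by
          simp only [Category.comp_id] at h0 h1 k0 k1 ⊢
          rw [h1, ← k0]; exact k1⟩ }
  map {X Y} u := ⟨u, u, by simp, by simp⟩
  map_id X := by apply Hom.ext <;> simp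
  map_comp f g := by apply Hom.ext <;> simp

end EqGpd

variable {C}

/-- `f` is an effective epimorphism: it is the coequalizer of its kernel pair. -/
def IsEffectiveEpi {X Y : C} (f : X ⟶ Y) : Prop :=
  ∃ w : pullback.fst f f ≫ f = pullback.snd f f ≫ f,
    Nonempty (IsColimit (Cofork.ofπ f w))

namespace RelTensor

variable (X : C) [HasBinaryCoproducts C] [∀ J : Type v, HasColimitsOfShape (Discrete J) C]

/-- `A ⊔ A^op` in `C/(X × X)`. -/
noncomputable def zig (A : Over (X ⨯ X)) : Over (X ⨯ X) :=
  Over.mk (coprod.desc A.hom ((opX X).obj A).hom)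

/-- Iterated tensor power for `⊗_X`. -/
noncomputable def pow (A : Over (X ⨯ X)) : ℕ → Over (X ⨯ X)
  | 0 => unitX X
  | n + 1 => tens X A (pow A n)

/-- The free `⊗_X`-monoid `G_X(A) = ∐ₙ (A ⊔ A^op)^{⊗_X n}` on `A ⊔ A^op`. -/
noncomputable def GXobj (A : Over (X ⨯ X)) : Over (X ⨯ X) :=
  Over.mk (Sigma.desc fun n : ULift.{v} ℕ => (pow X (zig X A) n.down).hom)

end RelTensor

open RelTensor

/-- An object of `C/(X × X)` is an equivalence relation on `X` if it is a subobject of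
`X × X` which is reflexive, symmetric and transitive. -/
def isEquivRelOver (X : C) (A : Over (X ⨯ X)) : Prop :=
  Mono A.hom ∧
  (∀ (T : C) (x : T ⟶ X), ∃ h : T ⟶ A.left, h ≫ A.hom = prod.lift x x) ∧
  (∀ (T : C) (x y : T ⟶ X), (∃ h : T ⟶ A.left, h ≫ A.hom = prod.lift x y) →
    ∃ h : T ⟶ A.left, h ≫ A.hom = prod.lift y x) ∧
  (∀ (T : C) (x y z : T ⟶ X), (∃ h : T ⟶ A.left, h ≫ A.hom = prod.lift x y) →
    (∃ h : T ⟶ A.left, h ≫ A.hom = prod.lift y z) →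
    ∃ h : T ⟶ A.left, h ≫ A.hom = prod.lift x z)


/-!
In an infinitary pretopos quotients of equivalence relations exist and effective epimorphisms are
pullback-stable, so `C` is a regular category and `G_X(A) ⟶ X × X` has a regular-epi/mono
factorisation through its image `E`. A generalized element of `E` lifts to `G_X(A)` after a regular
epi cover, and, coproducts being universal, then lies in a single summand after a further
coproduct decomposition: locally it is a zigzag of `A`-edges. Zigzags are reflexive at length zero,
reverse and concatenate, and factoring through a mono is local for both kinds of cover, so `E` is an
equivalence relation. Conversely, every equivalence relation containing `A` contains every zigzag,
hence `E`. Hom-sets into equivalence relations are subsingletons, so these facts make `E` the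
reflection of `A`.
-/

theorem isEffectiveEpi_iff_isRegularEpi {Y Z : C} (f : Y ⟶ Z) :
    IsEffectiveEpi f ↔ IsRegularEpi f := by
  constructor
  · rintro ⟨_, ⟨hc⟩⟩
    exact isRegularEpi_of_regularEpi (regularEpiOfKernelPair f hc)
  · intro
    exact ⟨pullback.condition, ⟨isColimitCoforkOfEffectiveEpi f _ (limit.isLimit _)⟩⟩

noncomputable def EqGpd.ofIsKernelPair {Y Z R : C} {f : Y ⟶ Z} {g₁ g₂ : R ⟶ Y}
    (h : IsKernelPair f g₁ g₂) : EqGpd C :=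
  have comp_eq {T : C} {x y : T ⟶ Y} {k : T ⟶ R} (hx : k ≫ g₁ = x) (hy : k ≫ g₂ = y) :
      x ≫ f = y ≫ f := by
    rw [← hx, ← hy, Category.assoc, Category.assoc, h.w]
  { X₀ := Y
    X₁ := R
    d₀ := g₁
    d₁ := g₂
    mono := ⟨fun a b hab => h.hom_ext
      (by simpa only [Category.assoc, prod.lift_fst] using hab =≫ prod.fst)
      (by simpa only [Category.assoc, prod.lift_snd] using hab =≫ prod.snd)⟩
    refl T x := ⟨h.lift x x rfl, h.lift_fst _ _ _, h.lift_snd _ _ _⟩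
    symm T x y := fun ⟨_, hx, hy⟩ =>
      ⟨h.lift y x (comp_eq hx hy).symm, h.lift_fst _ _ _, h.lift_snd _ _ _⟩
    trans T x y z := fun ⟨_, hx, hy⟩ ⟨_, hy', hz⟩ =>
      ⟨h.lift x z ((comp_eq hx hy).trans (comp_eq hy' hz)),
        h.lift_fst _ _ _, h.lift_snd _ _ _⟩ }

theorem regular_of_hasCoequalizer_of_stable (hcoeq : ∀ A : EqGpd C, HasCoequalizer A.d₀ A.d₁)
    (hstab : ∀ {X Y Z : C} (f : X ⟶ Y) (g : Z ⟶ Y),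
      IsEffectiveEpi f → IsEffectiveEpi (pullback.snd f g)) : Regular C where
  hasCoequalizer_of_isKernelPair h := hcoeq (EqGpd.ofIsKernelPair h)
  regularEpiIsStableUnderBaseChange := .mk' fun _ _ _ f g _ hg => by
    rw [← pullbackSymmetry_hom_comp_snd]
    refine ((MorphismProperty.regularEpi C).cancel_left_of_respectsIso _ _).2 ?_
    exact (isEffectiveEpi_iff_isRegularEpi _).1
      (hstab g f ((isEffectiveEpi_iff_isRegularEpi g).2 hg))

def UniversalCoproducts (C : Type u) [Category.{v} C] : Prop :=
  ∀ {J : Type v} (F : Discrete J ⥤ C) (c : Cocone F), IsColimit c → IsUniversalColimit c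

theorem nonempty_isColimit_cofan_pullback_sigma (huniv : UniversalCoproducts C) {ι : Type v}
    [HasColimitsOfShape (Discrete ι) C] (Z : ι → C) {T : C} (k : T ⟶ ∐ Z) :
    Nonempty (IsColimit (Cofan.mk T fun i => pullback.fst k (Sigma.ι Z i))) := by
  refine huniv (Discrete.functor Z) (colimit.cocone _) (colimit.isColimit _) _
    (Discrete.natTrans fun i => pullback.snd k (Sigma.ι Z i.as)) k ?_
    (NatTrans.Equifibered.of_discrete _) fun ⟨i⟩ => IsPullback.of_hasPullback k (Sigma.ι Z i)
  ext ⟨i⟩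
  simpa using pullback.condition.symm

theorem Over.subsingleton_hom_of_mono {D : Type*} [Category D] {Y : D} {A B : Over Y}
    [Mono B.hom] : Subsingleton (A ⟶ B) :=
  ⟨fun f g => Over.OverMorphism.ext ((cancel_mono B.hom).1 (by rw [Over.w f, Over.w g]))⟩

namespace ObjectProperty

variable {D : Type*} [Category D] (P : ObjectProperty D)
  (hP : ∀ (A : D) {B : D}, P B → Subsingleton (A ⟶ B)) (R : D → P.FullSubcategory)
  (unit : ∀ A, Nonempty (A ⟶ (R A).obj))
  (desc : ∀ A (B : P.FullSubcategory), Nonempty (A ⟶ B.obj) → Nonempty ((R A).obj ⟶ B.obj))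

noncomputable def thinReflectionHomEquiv (A : D) (B : P.FullSubcategory) :
    (R A ⟶ B) ≃ (A ⟶ P.ι.obj B) where
  toFun g := (unit A).some ≫ g.hom
  invFun f := ObjectProperty.homMk (desc A B ⟨f⟩).some
  left_inv _ := ObjectProperty.hom_ext _ ((hP _ B.property).elim _ _)
  right_inv _ := (hP A B.property).elim _ _

noncomputable def thinReflector : D ⥤ P.FullSubcategory :=
  Adjunction.leftAdjointOfEquiv (thinReflectionHomEquiv P hP R unit desc)
    fun A _ B' _ _ => (hP A B'.property).elim _ _

noncomputable def thinReflectorAdjunction : thinReflector P hP R unit desc ⊣ P.ι :=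
  Adjunction.adjunctionOfEquivLeft _ _

end ObjectProperty

namespace RelTensor

variable {X : C}

/-- The generalized element `(x, y)` of `X × X` lies in `B`; the clauses of `isEquivRelOver`
are stated in these terms. -/
def Related (B : Over (X ⨯ X)) {T : C} (x y : T ⟶ X) : Prop :=
  ∃ h : T ⟶ B.left, h ≫ B.hom = prod.lift x y

variable {A B : Over (X ⨯ X)} {T : C} {x y z : T ⟶ X}

theorem related_iff :
    Related B x y ↔ ∃ h : T ⟶ B.left, h ≫ src X B = x ∧ h ≫ tgt X B = y := by
  simp only [Related, prod.hom_ext_iff, Category.assoc, prod.lift_fst, prod.lift_snd]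

theorem Related.precomp {S : C} (s : S ⟶ T) : Related B x y → Related B (s ≫ x) (s ≫ y)
  | ⟨h, hh⟩ => ⟨s ≫ h, by rw [Category.assoc, hh, prod.comp_lift]⟩

theorem Related.of_hom (f : A ⟶ B) : Related A x y → Related B x y
  | ⟨h, hh⟩ => ⟨h ≫ f.left, by rw [Category.assoc, Over.w f, hh]⟩

theorem Related.of_strongEpi_precomp {T' : C} (p : T' ⟶ T) [StrongEpi p] [Mono B.hom]
    (h : Related B (p ≫ x) (p ≫ y)) : Related B x y := by
  obtain ⟨h, hh⟩ := h
  have sq : CommSq h p B.hom (prod.lift x y) := ⟨by rw [hh, prod.comp_lift]⟩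
  exact ⟨sq.lift, sq.fac_right⟩

theorem Related.of_isColimit_cofan {ι : Type*} {S : ι → C} {c : Cofan S} (hc : IsColimit c)
    {x y : c.pt ⟶ X} (h : ∀ i, Related B (c.inj i ≫ x) (c.inj i ≫ y)) : Related B x y := by
  choose g hg using h
  refine ⟨Cofan.IsColimit.desc hc g, Cofan.IsColimit.hom_ext hc _ _ fun i => ?_⟩
  rw [Cofan.IsColimit.fac_assoc, hg, prod.comp_lift]

theorem nonempty_hom_iff_related : Nonempty (A ⟶ B) ↔ Related B (src X A) (tgt X A) := by
  have hA : prod.lift (src X A) (tgt X A) = A.hom := by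
    rw [← prod.comp_lift, prod.lift_fst_snd, Category.comp_id]
  rw [Related, hA]
  exact ⟨fun ⟨f⟩ => ⟨f.left, Over.w f⟩, fun ⟨h, hh⟩ => ⟨Over.homMk h hh⟩⟩

theorem unitX_src : src X (unitX X) = 𝟙 X :=
  prod.lift_fst _ _

theorem unitX_tgt : tgt X (unitX X) = 𝟙 X :=
  prod.lift_snd _ _

theorem related_unitX_iff : Related (unitX X) x y ↔ x = y := by
  rw [related_iff, unitX_src, unitX_tgt]
  constructor
  · rintro ⟨h, rfl, rfl⟩
    rfl
  · rintro rfl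
    exact ⟨x, Category.comp_id x, Category.comp_id x⟩

theorem tens_src : src X (tens X A B) = pullback.fst (tgt X A) (src X B) ≫ src X A :=
  prod.lift_fst _ _

theorem tens_tgt : tgt X (tens X A B) = pullback.snd (tgt X A) (src X B) ≫ tgt X B :=
  prod.lift_snd _ _

theorem related_tens_iff : Related (tens X A B) x z ↔ ∃ y, Related A x y ∧ Related B y z := by
  simp only [related_iff]
  constructor
  · rintro ⟨h, rfl, rfl⟩
    refine ⟨h ≫ pullback.fst _ _ ≫ tgt X A, ⟨h ≫ pullback.fst _ _, ?_, ?_⟩,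
      ⟨h ≫ pullback.snd _ _, ?_, ?_⟩⟩
    · rw [tens_src]; exact Category.assoc _ _ _
    · exact Category.assoc _ _ _
    · exact (Category.assoc _ _ _).trans (h ≫= pullback.condition.symm)
    · rw [tens_tgt]; exact Category.assoc _ _ _
  · rintro ⟨y, ⟨a, rfl, hay⟩, ⟨b, hby, rfl⟩⟩
    refine ⟨pullback.lift a b (hay.trans hby.symm), ?_, ?_⟩
    · rw [tens_src]; exact pullback.lift_fst_assoc _ _ _ _
    · rw [tens_tgt]; exact pullback.lift_snd_assoc _ _ _ _

theorem related_pow_zero_iff : Related (pow X B 0) x y ↔ x = y :=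
  related_unitX_iff

theorem related_pow_succ_iff {n : ℕ} :
    Related (pow X B (n + 1)) x z ↔ ∃ y, Related B x y ∧ Related (pow X B n) y z :=
  related_tens_iff

theorem Related.pow_one (h : Related B x y) : Related (pow X B 1) x y :=
  related_pow_succ_iff.2 ⟨y, h, related_pow_zero_iff.2 rfl⟩

theorem Related.pow_add {n m : ℕ} (h₁ : Related (pow X B n) x y)
    (h₂ : Related (pow X B m) y z) :
    Related (pow X B (n + m)) x z := by
  induction n generalizing x with
  | zero => rwa [related_pow_zero_iff.1 h₁, Nat.zero_add]
  | succ n ih =>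
    obtain ⟨u, hxu, huy⟩ := related_pow_succ_iff.1 h₁
    rw [Nat.succ_add]
    exact related_pow_succ_iff.2 ⟨u, hxu, ih huy⟩

theorem Related.pow_symm (hB : ∀ (T : C) (x y : T ⟶ X), Related B x y → Related B y x)
    {n : ℕ}
    (h : Related (pow X B n) x y) : Related (pow X B n) y x := by
  induction n generalizing x y with
  | zero => exact related_pow_zero_iff.2 (related_pow_zero_iff.1 h).symm
  | succ n ih =>
    obtain ⟨u, hxu, huy⟩ := related_pow_succ_iff.1 h
    exact (ih huy).pow_add (hB _ _ _ hxu).pow_one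

theorem opX_src : src X ((opX X).obj B) = tgt X B :=
  (Category.assoc _ _ _).trans (B.hom ≫= prod.lift_fst _ _)

theorem opX_tgt : tgt X ((opX X).obj B) = src X B :=
  (Category.assoc _ _ _).trans (B.hom ≫= prod.lift_snd _ _)

theorem related_opX_iff : Related ((opX X).obj B) x y ↔ Related B y x := by
  rw [related_iff, related_iff, opX_src, opX_tgt]
  exact ⟨fun ⟨h, hx, hy⟩ => ⟨h, hy, hx⟩, fun ⟨h, hy, hx⟩ => ⟨h, hx, hy⟩⟩

variable [HasBinaryCoproducts C]

theorem related_zig_of_related (h : Related A x y) : Related (zig X A) x y :=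
  h.of_hom (Over.homMk coprod.inl (coprod.inl_desc _ _))

noncomputable def zigSwap : zig X A ⟶ (opX X).obj (zig X A) :=
  Over.homMk (coprod.desc coprod.inr coprod.inl) (by
    -- both summands of `zig X A` have underlying object `A.left`
    change (coprod.desc coprod.inr coprod.inl : A.left ⨿ A.left ⟶ A.left ⨿ A.left) ≫
      coprod.desc A.hom (A.hom ≫ (prod.braiding X X).hom) ≫ (prod.braiding X X).hom =
      coprod.desc A.hom (A.hom ≫ (prod.braiding X X).hom)
    apply coprod.hom_ext
    · rw [coprod.inl_desc_assoc, coprod.inr_desc_assoc, coprod.inl_desc, Category.assoc,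
        prod.symmetry, Category.comp_id]
    · rw [coprod.inr_desc_assoc, coprod.inl_desc_assoc, coprod.inr_desc])

theorem Related.zig_symm (h : Related (zig X A) x y) : Related (zig X A) y x :=
  related_opX_iff.1 (h.of_hom zigSwap)

theorem nonempty_zig_hom (hB : ∀ (T : C) (x y : T ⟶ X), Related B x y → Related B y x)
    (f : A ⟶ B) : Nonempty (zig X A ⟶ B) := by
  obtain ⟨g⟩ : Nonempty ((opX X).obj A ⟶ B) := by
    rw [nonempty_hom_iff_related, opX_src, opX_tgt]
    exact hB _ _ _ (nonempty_hom_iff_related.1 ⟨f⟩)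
  exact ⟨Over.homMk (coprod.desc f.left g.left) (by
    apply coprod.hom_ext <;>
      simp only [zig, Over.mk_hom, coprod.inl_desc_assoc, coprod.inr_desc_assoc, coprod.inl_desc,
        coprod.inr_desc, Over.w])⟩

theorem Related.of_pow_zig (hB : isEquivRelOver X B) (f : A ⟶ B) {n : ℕ}
    (h : Related (pow X (zig X A) n) x y) : Related B x y := by
  obtain ⟨-, hrefl, hsymm, htrans⟩ := hB
  obtain ⟨g⟩ := nonempty_zig_hom hsymm f
  induction n generalizing x with
  | zero => exact related_pow_zero_iff.1 h ▸ hrefl _ y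
  | succ n ih =>
    obtain ⟨u, hxu, huy⟩ := related_pow_succ_iff.1 h
    exact htrans _ _ _ _ (hxu.of_hom g) (ih huy)

variable [∀ J : Type v, HasColimitsOfShape (Discrete J) C]

theorem Related.GXobj_of_pow {n : ℕ} (h : Related (pow X (zig X A) n) x y) :
    Related (GXobj X A) x y :=
  h.of_hom (Over.homMk (Sigma.ι (fun n : ULift.{v} ℕ => (pow X (zig X A) n.down).left) ⟨n⟩)
    (Sigma.ι_desc _ _))

end RelTensor

namespace RelTensor

variable {C : Type u} [Category.{v} C] [Regular C] [HasBinaryCoproducts C]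
  [∀ J : Type v, HasColimitsOfShape (Discrete J) C] {X : C} {A B : Over (X ⨯ X)} {T : C}
  {x y z : T ⟶ X}

noncomputable def eqvGen (X : C) (A : Over (X ⨯ X)) : Over (X ⨯ X) :=
  Over.mk (Regular.strongEpiMonoFactorisation (GXobj X A).hom).m

instance : Mono (eqvGen X A).hom :=
  (Regular.strongEpiMonoFactorisation _).m_mono

noncomputable def toEqvGen (X : C) (A : Over (X ⨯ X)) : GXobj X A ⟶ eqvGen X A :=
  Over.homMk _ (Regular.strongEpiMonoFactorisation _).fac

instance : IsRegularEpi (toEqvGen X A).left :=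
  inferInstanceAs (IsRegularEpi (Regular.strongEpiMonoFactorisation _).e)

theorem Related.eqvGen_of_pow {n : ℕ} (h : Related (pow X (zig X A) n) x y) :
    Related (eqvGen X A) x y :=
  h.GXobj_of_pow.of_hom (toEqvGen X A)

theorem Related.GXobj_induction (huniv : UniversalCoproducts C) {x' y' : T ⟶ X}
    (hxy : Related (GXobj X A) x y)
    (H : ∀ (S : C) (s : S ⟶ T) (n : ℕ),
      Related (pow X (zig X A) n) (s ≫ x) (s ≫ y) → Related B (s ≫ x') (s ≫ y')) :
    Related B x' y' := by
  let P : ULift.{v} ℕ → C := fun n => (pow X (zig X A) n.down).left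
  obtain ⟨h, hh⟩ : ∃ h : T ⟶ ∐ P,
      h ≫ Sigma.desc (fun n => (pow X (zig X A) n.down).hom) = prod.lift x y := hxy
  obtain ⟨hc⟩ := nonempty_isColimit_cofan_pullback_sigma huniv P h
  refine Related.of_isColimit_cofan hc fun i => H _ _ i.down ⟨pullback.snd _ _, ?_⟩
  rw [← Sigma.ι_desc (fun n => (pow X (zig X A) n.down).hom) i, ← pullback.condition_assoc, hh,
    prod.comp_lift]
  rfl

theorem Related.eqvGen_induction (huniv : UniversalCoproducts C) [Mono B.hom] {x' y' : T ⟶ X}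
    (hxy : Related (eqvGen X A) x y)
    (H : ∀ (S : C) (s : S ⟶ T) (n : ℕ),
      Related (pow X (zig X A) n) (s ≫ x) (s ≫ y) → Related B (s ≫ x') (s ≫ y')) :
    Related B x' y' := by
  obtain ⟨h, hh⟩ := hxy
  let p := pullback.snd (toEqvGen X A).left h
  refine Related.of_strongEpi_precomp p ?_
  have hGX : Related (GXobj X A) (p ≫ x) (p ≫ y) :=
    ⟨pullback.fst _ h, by rw [← prod.comp_lift, ← hh, ← pullback.condition_assoc, Over.w]⟩
  refine hGX.GXobj_induction huniv fun S s n hs => ?_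
  simpa only [Category.assoc] using H S (s ≫ p) n (by simpa only [Category.assoc] using hs)

theorem Related.eqvGen_symm (huniv : UniversalCoproducts C) (hxy : Related (eqvGen X A) x y) :
    Related (eqvGen X A) y x :=
  hxy.eqvGen_induction huniv fun _ _ _ h =>
    (h.pow_symm fun _ _ _ => Related.zig_symm).eqvGen_of_pow

theorem Related.eqvGen_trans (huniv : UniversalCoproducts C) (hxy : Related (eqvGen X A) x y)
    (hyz : Related (eqvGen X A) y z) :
    Related (eqvGen X A) x z :=
  hxy.eqvGen_induction huniv fun _ s _ hp =>
    (hyz.precomp s).eqvGen_induction huniv fun _ s' _ hq =>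
      ((hp.precomp s').pow_add hq).eqvGen_of_pow

theorem isEquivRelOver_eqvGen (huniv : UniversalCoproducts C) :
    isEquivRelOver X (eqvGen X A) :=
  ⟨inferInstance, fun _ _ => (related_pow_zero_iff.2 rfl).eqvGen_of_pow (n := 0),
    fun _ _ _ => Related.eqvGen_symm huniv, fun _ _ _ _ => Related.eqvGen_trans huniv⟩

theorem nonempty_hom_eqvGen : Nonempty (A ⟶ eqvGen X A) :=
  nonempty_hom_iff_related.2
    (related_zig_of_related (nonempty_hom_iff_related.1 ⟨𝟙 A⟩)).pow_one.eqvGen_of_pow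

theorem nonempty_eqvGen_hom (huniv : UniversalCoproducts C) (hB : isEquivRelOver X B)
    (f : A ⟶ B) : Nonempty (eqvGen X A ⟶ B) :=
  have := hB.1
  nonempty_hom_iff_related.2 <| (nonempty_hom_iff_related.1 ⟨𝟙 _⟩).eqvGen_induction huniv
    fun _ _ _ h => h.of_pow_zig hB f

end RelTensor

/-- in an infinitary pretopos, the full subcategory of `C/(X × X)`
spanned by equivalence relations on `X` is reflective, the reflection of `A` being the
image (effective-epi/mono factorization) of `G_X(A) ⟶ X × X`. -/
theorem equivalence_relations_reflective
    [∀ J : Type v, HasColimitsOfShape (Discrete J) C] [HasBinaryCoproducts C]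
    (hdisj : Nonempty (BinaryCoproductsDisjoint C))
    (huniv : ∀ {J : Type v} (F : Discrete J ⥤ C) (c : Cocone F),
      IsColimit c → IsUniversalColimit c)
    (heff : ∀ A : EqGpd C, ∃ (Q : C) (q : A.X₀ ⟶ Q) (w : A.d₀ ≫ q = A.d₁ ≫ q),
      Nonempty (IsColimit (Cofork.ofπ q w)) ∧ IsIso (pullback.lift A.d₀ A.d₁ w))
    (hstab : ∀ {X Y Z : C} (f : X ⟶ Y) (g : Z ⟶ Y),
      IsEffectiveEpi f → IsEffectiveEpi (pullback.snd f g))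
    (X : C) :
    ∃ (L : Over (X ⨯ X) ⥤ ObjectProperty.FullSubcategory (isEquivRelOver X))
      (_ : L ⊣ ObjectProperty.ι (isEquivRelOver X)),
      ∀ A : Over (X ⨯ X), ∃ e : (GXobj X A).left ⟶ (L.obj A).obj.left,
        IsEffectiveEpi e ∧ Mono (L.obj A).obj.hom ∧
        e ≫ (L.obj A).obj.hom = (GXobj X A).hom := by
  have hcoeq (E : EqGpd C) : HasCoequalizer E.d₀ E.d₁ := by
    obtain ⟨_, _, _, ⟨hc⟩, -⟩ := heff E
    exact ⟨⟨⟨_, hc⟩⟩⟩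
  have := regular_of_hasCoequalizer_of_stable hcoeq hstab
  have hsub (A : Over (X ⨯ X)) {B : Over (X ⨯ X)} (hB : isEquivRelOver X B) :
      Subsingleton (A ⟶ B) :=
    have := hB.1
    Over.subsingleton_hom_of_mono
  refine ⟨ObjectProperty.thinReflector _ hsub
      (fun A => ⟨eqvGen X A, isEquivRelOver_eqvGen huniv⟩) (fun _ => nonempty_hom_eqvGen)
      (fun _ B ⟨f⟩ => nonempty_eqvGen_hom huniv B.property f),
    ObjectProperty.thinReflectorAdjunction .., fun A => ?_⟩
  exact ⟨(toEqvGen X A).left,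
    (isEffectiveEpi_iff_isRegularEpi (toEqvGen X A).left).2 inferInstance,
    inferInstanceAs (Mono (eqvGen X A).hom), Over.w (toEqvGen X A)⟩
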